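/- arXiv:1311.6462 — 2 statements merged into one kernel-verified Lean document; each statement's English description precedes it below -/
import Mathlib

section
/- For the bicomplex polynomial P_c(w) = w² + c with c = c1 + c2·i2, the n-th forward iterate satisfies P_c^n(z1 + z2·i2) = P_{c1-c2·i1}^n(z1 - z2·i1)·e1 + P_{c1+c2·i1}^n(z1 + z2·i1)·e2 for all natural numbers n, where P_a(z) = z² + a is the complex quadratic polynomial. -/
/- We model the bicomplex numbers `BC` via their idempotent representation:
a bicomplex number `w = w₁·e₁ + w₂·e₂` is identified with the pair `(w₁, w₂) : ℂ × ℂ`,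
which is a ring isomorphism onto the product ring `ℂ × ℂ`. -/
noncomputable section

abbrev BC : Type := ℂ × ℂ

/-- The canonical embedding of `ℂ(i₁)` into the bicomplex numbers. -/
def BC.toBC (z : ℂ) : BC := (z, z)

/-- The imaginary unit `i₁`. -/
def BC.i1 : BC := (Complex.I, Complex.I)

/-- The imaginary unit `i₂`. -/
def BC.i2 : BC := (-Complex.I, Complex.I)

/-- The hyperbolic unit `j = i₁·i₂`. -/
def BC.j : BC := BC.i1 * BC.i2

/-- The idempotent `e₁ = (1 + j)/2`. -/
def BC.e1 : BC := ((1 : BC) + BC.j) / 2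

/-- The idempotent `e₂ = (1 - j)/2`. -/
def BC.e2 : BC := ((1 : BC) - BC.j) / 2

/-- The bicomplex number `z₁ + z₂·i₂`. -/
def BC.mk (z1 z2 : ℂ) : BC := BC.toBC z1 + BC.toBC z2 * BC.i2

/-- The real modulus of a bicomplex number, expressed through its idempotent
components: `‖w₁·e₁ + w₂·e₂‖ = √((|w₁|² + |w₂|²)/2)`. -/
def BC.norm (w : BC) : ℝ := Real.sqrt ((‖w.1‖ ^ 2 + ‖w.2‖ ^ 2) / 2)

/-- The idempotent cartesian product `X₁ ×ₑ X₂`. -/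
def BC.cartE (X1 X2 : Set ℂ) : Set BC :=
  {w : BC | ∃ w1 ∈ X1, ∃ w2 ∈ X2, w = BC.toBC w1 * BC.e1 + BC.toBC w2 * BC.e2}

/-! In the idempotent representation `e₁ = (1, 0)`, `e₂ = (0, 1)` and `z₁ + z₂i₂ = (z₁ - z₂i₁, z₁ + z₂i₁)`,
while squaring and adding a constant act componentwise on `ℂ × ℂ`; hence `P_c` is the product of
the two complex maps `P_{c₁ ∓ c₂i₁}`, and so are its iterates. -/

namespace BC

theorem e1_eq : e1 = (1, 0) := by
  ext <;> simp [e1, j, i1, i2]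

theorem e2_eq : e2 = (0, 1) := by
  ext <;> simp [e2, j, i1, i2]

theorem mk_eq (z1 z2 : ℂ) : mk z1 z2 = (z1 - z2 * Complex.I, z1 + z2 * Complex.I) := by
  ext <;> simp [mk, toBC, i2, sub_eq_add_neg]

theorem toBC_mul_e1_add_toBC_mul_e2 (a b : ℂ) : toBC a * e1 + toBC b * e2 = (a, b) := by
  ext <;> simp [toBC, e1_eq, e2_eq]

end BC

theorem Prod.sq_add_eq_map {R S : Type*} [Monoid R] [Add R] [Monoid S] [Add S] (c : R × S) :
    (fun w : R × S => w ^ 2 + c) = Prod.map (fun x => x ^ 2 + c.1) (fun y => y ^ 2 + c.2) :=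
  rfl

/-- the iterates of the bicomplex polynomial `P_c(w) = w² + c` decompose
idempotent-component-wise into iterates of the complex quadratic polynomials. -/
theorem stmt8 (c1 c2 z1 z2 : ℂ) (n : ℕ) :
    (fun w : BC => w ^ 2 + BC.mk c1 c2)^[n] (BC.mk z1 z2) =
      BC.toBC ((fun z : ℂ => z ^ 2 + (c1 - c2 * Complex.I))^[n] (z1 - z2 * Complex.I)) * BC.e1 +
      BC.toBC ((fun z : ℂ => z ^ 2 + (c1 + c2 * Complex.I))^[n] (z1 + z2 * Complex.I)) * BC.e2 := by
  rw [BC.toBC_mul_e1_add_toBC_mul_e2, BC.mk_eq, BC.mk_eq, Prod.sq_add_eq_map, Prod.map_iterate,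
    Prod.map_apply]
end
end

section
/- Let c = c1 + c2·i2 be a bicomplex number and w1 a fixed point of P_c(w) = w² + c with w1 ∈ J_{c1-c2·i1} ×_e J_{c1+c2·i1}. Then the set of all inverse iterates ∪_{k≥1} P_c^{-k}(w1) is dense in J_{c1-c2·i1} ×_e J_{c1+c2·i1}. -/
/- We model the bicomplex numbers `BC` via their idempotent representation:
a bicomplex number `w = w₁·e₁ + w₂·e₂` is identified with the pair `(w₁, w₂) : ℂ × ℂ`,
which is a ring isomorphism onto the product ring `ℂ × ℂ`. -/
noncomputable section

/-- The complex filled-in Julia set of `z ↦ z² + a`. -/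
def Kc (a : ℂ) : Set ℂ :=
  {z : ℂ | ∃ M : ℝ, ∀ n : ℕ, ‖(fun z : ℂ => z ^ 2 + a)^[n] z‖ ≤ M}

/-- The bicomplex filled-in Julia set of `w ↦ w² + c`. -/
def K2 (c : BC) : Set BC :=
  {w : BC | ∃ M : ℝ, ∀ n : ℕ, BC.norm ((fun w : BC => w ^ 2 + c)^[n] w) ≤ M}

/-! In idempotent coordinates `P_c` is the product of the complex maps `P_{c₁-c₂i₁}` and
`P_{c₁+c₂i₁}`, and `×ₑ` is the cartesian product. The backward orbits of a fixed point increase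
with the number of steps, so the points reaching `w₁ = (u, v)` after a common number `k ≥ 1` of
steps are exactly the pairs whose coordinates reach `u` and `v` separately. Their closure is
therefore the product of the closures of the two complex backward orbits, which contain the two
Julia sets. -/

lemma BC.mk_eq_s18 (c1 c2 : ℂ) :
    BC.mk c1 c2 = (c1 - c2 * Complex.I, c1 + c2 * Complex.I) := by
  simp only [BC.mk, BC.toBC, BC.i2, Prod.mk_add_mk, Prod.mk_mul_mk, mul_neg, sub_eq_add_neg]

lemma BC.e1_eq_s18 : BC.e1 = (1, 0) := by
  simp [BC.e1, BC.j, BC.i1, BC.i2, Prod.ext_iff]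

lemma BC.e2_eq_s18 : BC.e2 = (0, 1) := by
  simp [BC.e2, BC.j, BC.i1, BC.i2, Prod.ext_iff]

lemma BC.cartE_eq_prod (X Y : Set ℂ) : BC.cartE X Y = X ×ˢ Y := by
  ext ⟨x, y⟩
  simp [BC.cartE, BC.e1_eq_s18, BC.e2_eq_s18, BC.toBC]

lemma BC.sq_add_mk_eq_prodMap (c1 c2 : ℂ) :
    (fun w : BC => w ^ 2 + BC.mk c1 c2) =
      Prod.map (fun z : ℂ => z ^ 2 + (c1 - c2 * Complex.I))
        (fun z : ℂ => z ^ 2 + (c1 + c2 * Complex.I)) := by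
  rw [BC.mk_eq_s18]
  rfl

namespace Function

variable {α β : Type*} {f : α → α} {g : β → β}

lemma IsFixedPt.iterate_eq_of_le {u x : α} (hu : IsFixedPt f u) {k n : ℕ}
    (hx : f^[k] x = u) (hkn : k ≤ n) : f^[n] x = u := by
  rw [← Nat.sub_add_cancel hkn, iterate_add_apply, hx]
  exact (hu.iterate _).eq

lemma IsFixedPt.setOf_iterate_prodMap_eq {u : α} {v : β} (hu : IsFixedPt f u)
    (hv : IsFixedPt g v) (k₁ : ℕ) :
    {p : α × β | ∃ k, k₁ ≤ k ∧ (Prod.map f g)^[k] p = (u, v)} =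
      {x | ∃ k, k₁ ≤ k ∧ f^[k] x = u} ×ˢ {y | ∃ k, k₁ ≤ k ∧ g^[k] y = v} := by
  ext ⟨x, y⟩
  simp only [Set.mem_ofPred_eq, Set.mem_prod, Prod.map_iterate, Prod.map_apply, Prod.mk.injEq]
  constructor
  · rintro ⟨k, hk, hx, hy⟩
    exact ⟨⟨k, hk, hx⟩, ⟨k, hk, hy⟩⟩
  · rintro ⟨⟨k, hk, hx⟩, ⟨m, hm, hy⟩⟩
    exact ⟨max k m, hk.trans (le_max_left _ _), hu.iterate_eq_of_le hx (le_max_left _ _),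
      hv.iterate_eq_of_le hy (le_max_right _ _)⟩

end Function

/-- if `w₁` is a fixed point of `P_c` lying in
`J_{c₁-c₂·i₁} ×ₑ J_{c₁+c₂·i₁}`, then `⋃_{k ≥ 1} P_c⁻ᵏ(w₁)` is dense in
`J_{c₁-c₂·i₁} ×ₑ J_{c₁+c₂·i₁}`.  (We assume, as known, the corresponding complex
density result for inverse iterates.) -/
theorem stmt18 (c1 c2 : ℂ)
    (hcomplex : ∀ (a : ℂ), ∀ z ∈ frontier (Kc a), ∀ k1 : ℕ, 1 ≤ k1 →
      frontier (Kc a) ⊆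
        closure {v : ℂ | ∃ k : ℕ, k1 ≤ k ∧ (fun z : ℂ => z ^ 2 + a)^[k] v = z})
    (w1 : BC) (hfix : w1 ^ 2 + BC.mk c1 c2 = w1)
    (hw1 : w1 ∈ BC.cartE (frontier (Kc (c1 - c2 * Complex.I)))
        (frontier (Kc (c1 + c2 * Complex.I)))) :
    BC.cartE (frontier (Kc (c1 - c2 * Complex.I)))
        (frontier (Kc (c1 + c2 * Complex.I))) ⊆
      closure {v : BC | ∃ k : ℕ, 1 ≤ k ∧
        (fun w : BC => w ^ 2 + BC.mk c1 c2)^[k] v = w1} := by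
  obtain ⟨u, v⟩ := w1
  rw [BC.cartE_eq_prod] at hw1 ⊢
  obtain ⟨hu, hv⟩ := hw1
  have hfix_prod : Function.IsFixedPt (Prod.map (fun z : ℂ => z ^ 2 + (c1 - c2 * Complex.I))
      (fun z : ℂ => z ^ 2 + (c1 + c2 * Complex.I))) (u, v) := by
    rw [← BC.sq_add_mk_eq_prodMap]
    exact hfix
  obtain ⟨hfix_u, hfix_v⟩ := (Function.isFixedPt_prodMap _).mp hfix_prod
  rw [BC.sq_add_mk_eq_prodMap, hfix_u.setOf_iterate_prodMap_eq hfix_v, closure_prod_eq]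
  exact Set.prod_mono (hcomplex _ u hu 1 le_rfl) (hcomplex _ v hv 1 le_rfl)
end
end
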